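/- (Maximum theorem) Define ψ*(μ') = max_{w ∈ Λ} ψ(μ', w) and C*(μ') = argmax_{w ∈ Λ} ψ(μ', w) for any parameter μ' with a unique best arm. Then: (i) C*(μ) is nonempty, compact and convex; (ii) ψ* is continuous at μ, i.e. for every ε > 0 there is an open neighborhood U of μ such that every μ' ∈ U has a unique best arm and |ψ*(μ') − ψ*(μ)| < ε; (iii) C* is upper hemicontinuous at μ: for every open set V ⊆ ℝ^𝒜 with C*(μ) ⊆ V, there exists an open neighborhood U of μ such that every μ' ∈ U has a unique best arm and C*(μ') ⊆ V. -/

import Mathlib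

open Matrix

/-- The design matrix `∑_{a ∈ 𝒜} w_a a aᵀ` associated with an allocation `w`. -/
noncomputable def armMatrix {d : ℕ} (𝒜 : Finset (Fin d → ℝ)) (w : {a // a ∈ 𝒜} → ℝ) :
    Matrix (Fin d) (Fin d) ℝ :=
  ∑ a : {a // a ∈ 𝒜}, w a • vecMulVec (a : Fin d → ℝ) (a : Fin d → ℝ)

/-- The simplex `Λ = {w ∈ [0,1]^𝒜 : ∑_a w_a = 1}` of allocations over `𝒜`. -/
def simplexOn {d : ℕ} (𝒜 : Finset (Fin d → ℝ)) : Set ({a // a ∈ 𝒜} → ℝ) :=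
  {w | (∀ a, 0 ≤ w a ∧ w a ≤ 1) ∧ ∑ a, w a = 1}

/-- `astar` is the unique best arm of `𝒜` for the parameter `μ`. -/
def IsBestArm {d : ℕ} (𝒜 : Finset (Fin d → ℝ)) (μ astar : Fin d → ℝ) : Prop :=
  astar ∈ 𝒜 ∧ ∀ a ∈ 𝒜, a ≠ astar → μ ⬝ᵥ a < μ ⬝ᵥ astar

/-- The best arm `a*_μ = argmax_{a ∈ 𝒜} μᵀa` (defined via choice when it exists). -/
noncomputable def bestArm {d : ℕ} (𝒜 : Finset (Fin d → ℝ)) (μ : Fin d → ℝ) : Fin d → ℝ :=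
  open scoped Classical in
  if h : ∃ a, IsBestArm 𝒜 μ a then h.choose else 0

/-- The set of bad parameters
`B(μ) = {λ ∈ ℝ^d : ∃ a ∈ 𝒜 ∖ {a*_μ}, λᵀ(a*_μ − a) < 0}`. -/
def badSet {d : ℕ} (𝒜 : Finset (Fin d → ℝ)) (μ : Fin d → ℝ) : Set (Fin d → ℝ) :=
  {lam | ∃ a ∈ 𝒜, a ≠ bestArm 𝒜 μ ∧ lam ⬝ᵥ (bestArm 𝒜 μ - a) < 0}

/-- `ψ(μ, w) = inf_{λ ∈ B(μ)} ½ (μ−λ)ᵀ (∑_a w_a a aᵀ) (μ−λ)`. -/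
noncomputable def psi {d : ℕ} (𝒜 : Finset (Fin d → ℝ)) (μ : Fin d → ℝ)
    (w : {a // a ∈ 𝒜} → ℝ) : ℝ :=
  sInf ((fun lam => (1 / 2) * ((μ - lam) ⬝ᵥ (armMatrix 𝒜 w).mulVec (μ - lam))) '' badSet 𝒜 μ)

/-- `ψ*(μ) = max_{w ∈ Λ} ψ(μ, w)`. -/
noncomputable def psiStar {d : ℕ} (𝒜 : Finset (Fin d → ℝ)) (μ : Fin d → ℝ) : ℝ :=
  sSup (psi 𝒜 μ '' simplexOn 𝒜)

/-- `C*(μ) = argmax_{w ∈ Λ} ψ(μ, w)`. -/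
def Cstar {d : ℕ} (𝒜 : Finset (Fin d → ℝ)) (μ : Fin d → ℝ) : Set ({a // a ∈ 𝒜} → ℝ) :=
  {w ∈ simplexOn 𝒜 | ∀ w' ∈ simplexOn 𝒜, psi 𝒜 μ w' ≤ psi 𝒜 μ w}

/-
Near `μ` the best arm, hence the alternative set `B = badSet μ`, does not change. For fixed `λ`
the quantity `½ (μ-λ)ᵀ M(w) (μ-λ)` is linear and continuous in `w`, so `ψ(μ, ·)`, an infimum of
such functions, is concave and upper semicontinuous on the simplex. Writing `M(w) = DᵀD`, where
`D` has rows `√w_a aᵀ`, gives `ψ(ν, w) = ½ dist(Dν, D B)²`. That distance is Lipschitz in `ν`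
uniformly in `w`, since `‖D x‖ ≤ ‖D₁ x‖` for `D₁` the matrix with `w ≡ 1`, and it is bounded; so
`ψ(ν, ·) → ψ(μ, ·)` uniformly on the simplex. The three claims are then Berge's maximum theorem
for a uniformly convergent family whose limit is upper semicontinuous and concave on a compact
convex set.
-/

open Set Filter Topology

section Argmax

variable {X : Type*} {f : X → ℝ} {s : Set X}

theorem setOf_isMaxOn_eq {x₀ : X} (hx₀ : x₀ ∈ s) (h : IsMaxOn f s x₀) :
    {x ∈ s | IsMaxOn f s x} = {x ∈ s | f x₀ ≤ f x} := by
  ext x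
  refine and_congr_right fun _ => ⟨fun hx => isMaxOn_iff.1 hx x₀ hx₀, fun hx => ?_⟩
  exact isMaxOn_iff.2 fun y hy => (isMaxOn_iff.1 h y hy).trans hx

theorem UpperSemicontinuousOn.isCompact_setOf_isMaxOn [TopologicalSpace X]
    (hf : UpperSemicontinuousOn f s) (hs : IsCompact s) : IsCompact {x ∈ s | IsMaxOn f s x} := by
  obtain h | ⟨x₀, hx₀, hmax⟩ := {x ∈ s | IsMaxOn f s x}.eq_empty_or_nonempty
  · exact h ▸ isCompact_empty
  · rw [setOf_isMaxOn_eq hx₀ hmax]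
    exact hf.isCompact_inter_preimage_Ici hs (f x₀)

theorem ConcaveOn.convex_setOf_isMaxOn [AddCommMonoid X] [Module ℝ X] (hf : ConcaveOn ℝ s f) :
    Convex ℝ {x ∈ s | IsMaxOn f s x} := by
  obtain h | ⟨x₀, hx₀, hmax⟩ := {x ∈ s | IsMaxOn f s x}.eq_empty_or_nonempty
  · exact h ▸ convex_empty
  · rw [setOf_isMaxOn_eq hx₀ hmax]
    exact hf.convex_ge (f x₀)

theorem concaveOn_ciInf [AddCommMonoid X] [Module ℝ X] {ι : Sort*} {F : ι → X → ℝ}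
    (hs : Convex ℝ s) (hF : ∀ i, ConcaveOn ℝ s (F i))
    (hbdd : ∀ x ∈ s, BddBelow (range fun i => F i x)) :
    ConcaveOn ℝ s fun x => ⨅ i, F i x := by
  refine ⟨hs, fun x hx y hy a b ha hb hab => ?_⟩
  dsimp only
  cases isEmpty_or_nonempty ι
  · -- an empty infimum in `ℝ` is the junk value `0`, a constant function
    simp [Real.iInf_of_isEmpty]
  · refine le_ciInf fun i => ?_
    calc a • (⨅ i, F i x) + b • ⨅ i, F i y ≤ a • F i x + b • F i y := by
          gcongr <;> exact ciInf_le (hbdd _ ‹_›) i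
      _ ≤ F i (a • x + b • y) := (hF i).2 hx hy ha hb hab

end Argmax

section UniformConvergence

variable {ι X : Type*} {l : Filter ι} {F : ι → X → ℝ} {f : X → ℝ} {s : Set X}

theorem Continuous.comp_tendstoUniformlyOn_of_abs_le {g : ℝ → ℝ} (hg : Continuous g)
    (h : TendstoUniformlyOn F f l s) {C : ℝ} (hf : ∀ x ∈ s, |f x| ≤ C) :
    TendstoUniformlyOn (fun i x => g (F i x)) (fun x => g (f x)) l s := by
  have hg' : UniformContinuousOn g (Icc (-(C + 1)) (C + 1)) :=
    isCompact_Icc.uniformContinuousOn_of_continuous hg.continuousOn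
  refine hg'.comp_tendstoUniformlyOn_eventually ?_ (fun x hx => ?_) h
  · filter_upwards [Metric.tendstoUniformlyOn_iff.1 h 1 one_pos] with i hi x hx
    have hfx := abs_le.1 (hf x hx)
    have hFx := abs_lt.1 ((Real.dist_eq _ _ ▸ hi x hx : |f x - F i x| < 1))
    constructor <;> linarith
  · have hfx := abs_le.1 (hf x hx)
    constructor <;> linarith

theorem TendstoUniformlyOn.tendsto_sSup_image (h : TendstoUniformlyOn F f l s) (hs : s.Nonempty)
    (hf : BddAbove (f '' s)) : Tendsto (fun i => sSup (F i '' s)) l (𝓝 (sSup (f '' s))) := by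
  rw [Metric.tendsto_nhds]
  intro ε hε
  filter_upwards [Metric.tendstoUniformlyOn_iff.1 h (ε / 2) (half_pos hε)] with i hi
  have hclose : ∀ x ∈ s, |f x - F i x| < ε / 2 := fun x hx => Real.dist_eq _ _ ▸ hi x hx
  have hF_le : ∀ x ∈ s, F i x ≤ sSup (f '' s) + ε / 2 := fun x hx => by
    linarith [(abs_lt.1 (hclose x hx)).1, le_csSup hf (mem_image_of_mem f hx)]
  have hf_le : ∀ x ∈ s, f x ≤ sSup (F i '' s) + ε / 2 := fun x hx => by
    have hbdd : BddAbove (F i '' s) := ⟨_, forall_mem_image.2 hF_le⟩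
    linarith [(abs_lt.1 (hclose x hx)).2, le_csSup hbdd (mem_image_of_mem (F i) hx)]
  have h₁ := csSup_le (hs.image _) (forall_mem_image.2 hF_le)
  have h₂ := csSup_le (hs.image _) (forall_mem_image.2 hf_le)
  rw [Real.dist_eq, abs_sub_lt_iff]
  constructor <;> linarith

theorem TendstoUniformlyOn.eventually_setOf_isMaxOn_subset [TopologicalSpace X]
    (h : TendstoUniformlyOn F f l s) (hs : IsCompact s) (hf : UpperSemicontinuousOn f s)
    {V : Set X} (hV : IsOpen V) (hfV : {x ∈ s | IsMaxOn f s x} ⊆ V) :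
    ∀ᶠ i in l, {x ∈ s | IsMaxOn (F i) s x} ⊆ V := by
  obtain hsV | hsV := (s \ V).eq_empty_or_nonempty
  · exact .of_forall fun i x hx => by_contra fun hxV => hsV.subset ⟨hx.1, hxV⟩
  obtain ⟨x₁, hx₁, hmax₁⟩ := (hf.mono sdiff_subset).exists_isMaxOn hsV (hs.diff hV)
  obtain ⟨x₀, hx₀, hmax₀⟩ := hf.exists_isMaxOn (hsV.mono sdiff_subset) hs
  have hgap : f x₁ < f x₀ := by
    by_contra! hle
    exact hx₁.2 (hfV ⟨hx₁.1, isMaxOn_iff.2 fun y hy => (isMaxOn_iff.1 hmax₀ y hy).trans hle⟩)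
  filter_upwards [Metric.tendstoUniformlyOn_iff.1 h _ (half_pos (sub_pos.2 hgap))] with i hi
  rintro x ⟨hx, hxmax⟩
  by_contra hxV
  have hfx := isMaxOn_iff.1 hmax₁ x ⟨hx, hxV⟩
  have hFx := isMaxOn_iff.1 hxmax x₀ hx₀
  have hx_close := abs_lt.1 (Real.dist_eq _ _ ▸ hi x hx)
  have hx₀_close := abs_lt.1 (Real.dist_eq _ _ ▸ hi x₀ hx₀)
  linarith

end UniformConvergence

section Bandit

open Metric

variable {d : ℕ} {𝒜 : Finset (Fin d → ℝ)}

theorem IsBestArm.unique {ν a b : Fin d → ℝ} (ha : IsBestArm 𝒜 ν a) (hb : IsBestArm 𝒜 ν b) :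
    a = b := by
  by_contra hab
  linarith [ha.2 b hb.1 (Ne.symm hab), hb.2 a ha.1 hab]

theorem bestArm_eq {ν a : Fin d → ℝ} (h : IsBestArm 𝒜 ν a) : bestArm 𝒜 ν = a := by
  have hex : ∃ b, IsBestArm 𝒜 ν b := ⟨a, h⟩
  rw [bestArm, dif_pos hex]
  exact hex.choose_spec.unique h

theorem badSet_eq {ν a : Fin d → ℝ} (h : IsBestArm 𝒜 ν a) :
    badSet 𝒜 ν = {lam | ∃ b ∈ 𝒜, b ≠ a ∧ lam ⬝ᵥ (a - b) < 0} := by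
  rw [badSet, bestArm_eq h]

theorem IsBestArm.eventually {μ a : Fin d → ℝ} (h : IsBestArm 𝒜 μ a) :
    ∀ᶠ ν in 𝓝 μ, IsBestArm 𝒜 ν a := by
  have hcont (b : Fin d → ℝ) : Continuous fun ν : Fin d → ℝ => ν ⬝ᵥ b := by fun_prop
  have hlt : ∀ b ∈ 𝒜, ∀ᶠ ν in 𝓝 μ, b ≠ a → ν ⬝ᵥ b < ν ⬝ᵥ a := fun b hb => by
    by_cases hba : b = a
    · exact .of_forall fun _ hba' => absurd hba hba'
    · exact ((hcont b).continuousAt.eventually_lt (hcont a).continuousAt (h.2 b hb hba)).mono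
        fun _ hν _ => hν
  filter_upwards [(eventually_all_finset 𝒜).2 hlt] with ν hν using ⟨h.1, hν⟩

theorem simplexOn_eq_stdSimplex : simplexOn 𝒜 = stdSimplex ℝ 𝒜 := by
  ext w
  exact ⟨fun h => ⟨fun a => (h.1 a).1, h.2⟩, fun h => ⟨mem_Icc_of_mem_stdSimplex h, h.2⟩⟩

theorem Cstar_eq_setOf_isMaxOn (μ : Fin d → ℝ) :
    Cstar 𝒜 μ = {w ∈ stdSimplex ℝ 𝒜 | IsMaxOn (psi 𝒜 μ) (stdSimplex ℝ 𝒜) w} := by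
  simp only [Cstar, simplexOn_eq_stdSimplex, isMaxOn_iff]

theorem psiStar_eq_sSup (μ : Fin d → ℝ) : psiStar 𝒜 μ = sSup (psi 𝒜 μ '' stdSimplex ℝ 𝒜) := by
  rw [psiStar, simplexOn_eq_stdSimplex]

theorem dotProduct_armMatrix_mulVec (w : 𝒜 → ℝ) (x : Fin d → ℝ) :
    x ⬝ᵥ armMatrix 𝒜 w *ᵥ x = ∑ a : 𝒜, w a * ((a : Fin d → ℝ) ⬝ᵥ x) ^ 2 := by
  simp [armMatrix, sum_mulVec, smul_mulVec, vecMulVec_mulVec, sum_dotProduct, smul_dotProduct,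
    dotProduct_comm x, sq]

theorem psi_eq_iInf (ν : Fin d → ℝ) :
    psi 𝒜 ν = fun w =>
      ⨅ lam : badSet 𝒜 ν, 1 / 2 * ∑ a : 𝒜, w a * ((a : Fin d → ℝ) ⬝ᵥ (ν - lam)) ^ 2 := by
  funext w
  rw [psi, sInf_image']
  simp only [dotProduct_armMatrix_mulVec]

theorem bddBelow_range_psi_summands (ν : Fin d → ℝ) {w : 𝒜 → ℝ} (hw : w ∈ stdSimplex ℝ 𝒜) :
    BddBelow (range fun lam : badSet 𝒜 ν =>
      1 / 2 * ∑ a : 𝒜, w a * ((a : Fin d → ℝ) ⬝ᵥ (ν - lam)) ^ 2) := by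
  refine ⟨0, ?_⟩
  rintro _ ⟨lam, rfl⟩
  exact mul_nonneg (by norm_num) (Finset.sum_nonneg fun a _ => mul_nonneg (hw.1 a) (sq_nonneg _))

theorem upperSemicontinuousOn_psi (ν : Fin d → ℝ) :
    UpperSemicontinuousOn (psi 𝒜 ν) (stdSimplex ℝ 𝒜) := by
  rw [psi_eq_iInf]
  refine upperSemicontinuousOn_ciInf (fun w hw => bddBelow_range_psi_summands ν hw) fun lam => ?_
  exact (by fun_prop : Continuous _).continuousOn.upperSemicontinuousOn

theorem concaveOn_psi (ν : Fin d → ℝ) : ConcaveOn ℝ (stdSimplex ℝ 𝒜) (psi 𝒜 ν) := by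
  rw [psi_eq_iInf]
  refine concaveOn_ciInf (convex_stdSimplex ℝ _) (fun lam => ?_)
    fun w hw => bddBelow_range_psi_summands ν hw
  refine ⟨convex_stdSimplex ℝ _, fun x _ y _ a b _ _ _ => le_of_eq ?_⟩
  simp only [Pi.add_apply, Pi.smul_apply, smul_eq_mul, Finset.mul_sum, ← Finset.sum_add_distrib]
  exact Finset.sum_congr rfl fun _ _ => by ring

noncomputable def designMap (w : 𝒜 → ℝ) : (Fin d → ℝ) →ₗ[ℝ] EuclideanSpace ℝ 𝒜 where
  toFun x := WithLp.toLp 2 fun a => √(w a) * ((a : Fin d → ℝ) ⬝ᵥ x)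
  map_add' x y := by ext a; simp [dotProduct_add, mul_add]
  map_smul' c x := by ext a; simp [dotProduct_smul]; ring

theorem norm_designMap_sq {w : 𝒜 → ℝ} (hw : ∀ a, 0 ≤ w a) (x : Fin d → ℝ) :
    ‖designMap w x‖ ^ 2 = x ⬝ᵥ armMatrix 𝒜 w *ᵥ x := by
  rw [EuclideanSpace.norm_sq_eq, dotProduct_armMatrix_mulVec]
  refine Finset.sum_congr rfl fun a _ => ?_
  simp [designMap, mul_pow, Real.sq_sqrt (hw a)]

theorem norm_designMap_le {w : 𝒜 → ℝ} (hw : w ∈ stdSimplex ℝ 𝒜) (x : Fin d → ℝ) :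
    ‖designMap w x‖ ≤ ‖designMap (1 : 𝒜 → ℝ) x‖ := by
  refine le_of_pow_le_pow_left₀ two_ne_zero (norm_nonneg _) ?_
  rw [norm_designMap_sq hw.1, norm_designMap_sq (w := 1) fun _ => zero_le_one,
    dotProduct_armMatrix_mulVec, dotProduct_armMatrix_mulVec]
  gcongr with a
  exact (mem_Icc_of_mem_stdSimplex hw a).2

theorem psi_eq_half_sq_infDist {w : 𝒜 → ℝ} (hw : ∀ a, 0 ≤ w a) (ν : Fin d → ℝ) :
    psi 𝒜 ν w = 1 / 2 * infDist (designMap w ν) (designMap w '' badSet 𝒜 ν) ^ 2 := by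
  obtain hB | hB := (badSet 𝒜 ν).eq_empty_or_nonempty
  · simp [psi, hB]
  have hdist (lam : Fin d → ℝ) : 1 / 2 * ((ν - lam) ⬝ᵥ armMatrix 𝒜 w *ᵥ (ν - lam))
      = 1 / 2 * dist (designMap w ν) (designMap w lam) ^ 2 := by
    rw [dist_eq_norm, ← map_sub, norm_designMap_sq hw]
  set D := (fun lam => dist (designMap w ν) (designMap w lam)) '' badSet 𝒜 ν
  have hD : D ⊆ Ici 0 := by rintro _ ⟨_, _, rfl⟩; exact dist_nonneg
  have hinf : infDist (designMap w ν) (designMap w '' badSet 𝒜 ν) = sInf D := by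
    rw [← (isGLB_infDist (hB.image _)).csInf_eq ((hB.image _).image _), image_image]
  have hmono : MonotoneOn (fun t : ℝ => 1 / 2 * t ^ 2) (Ici 0) :=
    fun s (hs : 0 ≤ s) t _ hst => by dsimp only; gcongr
  rw [psi, hinf, funext hdist, ← image_image (fun t : ℝ => 1 / 2 * t ^ 2)]
  exact (MonotoneOn.map_csInf_of_continuousWithinAt (by fun_prop) (hmono.mono hD) (hB.image _)
    ⟨0, hD⟩).symm

theorem tendstoUniformlyOn_infDist_designMap (S : Set (Fin d → ℝ)) (μ : Fin d → ℝ) :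
    TendstoUniformlyOn (fun ν w => infDist (designMap w ν) (designMap w '' S))
      (fun w => infDist (designMap w μ) (designMap w '' S)) (𝓝 μ) (stdSimplex ℝ 𝒜) := by
  have hρ : Tendsto (fun ν => ‖designMap (1 : 𝒜 → ℝ) (μ - ν)‖) (𝓝 μ) (𝓝 0) := by
    have := (designMap (1 : 𝒜 → ℝ)).continuous_of_finiteDimensional
    simpa using (by fun_prop : Continuous fun ν => ‖designMap (1 : 𝒜 → ℝ) (μ - ν)‖).tendsto μ
  rw [Metric.tendstoUniformlyOn_iff]
  intro ε hε
  filter_upwards [(tendsto_order.1 hρ).2 ε hε] with ν hν w hw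
  calc dist _ _ ≤ dist (designMap w μ) (designMap w ν) := by
        simpa using (lipschitz_infDist_pt _).dist_le_mul (designMap w μ) (designMap w ν)
    _ = ‖designMap w (μ - ν)‖ := by rw [dist_eq_norm, map_sub]
    _ ≤ ‖designMap (1 : 𝒜 → ℝ) (μ - ν)‖ := norm_designMap_le hw _
    _ < ε := hν

theorem tendstoUniformlyOn_psi {μ a : Fin d → ℝ} (h : IsBestArm 𝒜 μ a) :
    TendstoUniformlyOn (fun ν => psi 𝒜 ν) (psi 𝒜 μ) (𝓝 μ) (stdSimplex ℝ 𝒜) := by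
  obtain ⟨C, hC⟩ : ∃ C, ∀ w ∈ stdSimplex ℝ 𝒜,
      |infDist (designMap w μ) (designMap w '' badSet 𝒜 μ)| ≤ C := by
    obtain hB | ⟨lam, hlam⟩ := (badSet 𝒜 μ).eq_empty_or_nonempty
    · exact ⟨0, fun w _ => by simp [hB]⟩
    · refine ⟨‖designMap (1 : 𝒜 → ℝ) (μ - lam)‖, fun w hw => ?_⟩
      rw [abs_of_nonneg infDist_nonneg]
      refine (infDist_le_dist_of_mem (mem_image_of_mem _ hlam)).trans ?_
      rw [dist_eq_norm, ← map_sub]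
      exact norm_designMap_le hw _
  have hsq := (by fun_prop : Continuous fun t : ℝ => 1 / 2 * t ^ 2)
    |>.comp_tendstoUniformlyOn_of_abs_le (tendstoUniformlyOn_infDist_designMap (badSet 𝒜 μ) μ) hC
  refine (hsq.congr ?_).congr_right ?_
  · filter_upwards [h.eventually] with ν hν w hw
    rw [psi_eq_half_sq_infDist hw.1, badSet_eq hν, badSet_eq h]
  · intro w hw
    rw [psi_eq_half_sq_infDist hw.1]

end Bandit

theorem maximum_theorem_general {d : ℕ} (𝒜 : Finset (Fin d → ℝ))
    (μ : Fin d → ℝ) (hstar : ∃! astar, IsBestArm 𝒜 μ astar) :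
    ((Cstar 𝒜 μ).Nonempty ∧ IsCompact (Cstar 𝒜 μ) ∧ Convex ℝ (Cstar 𝒜 μ)) ∧
    (∀ ε : ℝ, 0 < ε → ∃ U : Set (Fin d → ℝ), IsOpen U ∧ μ ∈ U ∧
      ∀ μ' ∈ U, (∃! astar', IsBestArm 𝒜 μ' astar') ∧ |psiStar 𝒜 μ' - psiStar 𝒜 μ| < ε) ∧
    (∀ V : Set ({a // a ∈ 𝒜} → ℝ), IsOpen V → Cstar 𝒜 μ ⊆ V →
      ∃ U : Set (Fin d → ℝ), IsOpen U ∧ μ ∈ U ∧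
        ∀ μ' ∈ U, (∃! astar', IsBestArm 𝒜 μ' astar') ∧ Cstar 𝒜 μ' ⊆ V) := by
  classical
  obtain ⟨a, ha, -⟩ := hstar
  have hΛ : (stdSimplex ℝ 𝒜).Nonempty := ⟨_, single_mem_stdSimplex ℝ ⟨a, ha.1⟩⟩
  have hΛc := isCompact_stdSimplex ℝ 𝒜
  have husc := upperSemicontinuousOn_psi (𝒜 := 𝒜) μ
  have hunif := tendstoUniformlyOn_psi ha
  have hunique : ∀ᶠ ν in 𝓝 μ, ∃! b, IsBestArm 𝒜 ν b :=
    ha.eventually.mono fun ν hν => ⟨a, hν, fun b hb => hb.unique hν⟩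
  simp only [Cstar_eq_setOf_isMaxOn, psiStar_eq_sSup]
  refine ⟨⟨?_, husc.isCompact_setOf_isMaxOn hΛc, (concaveOn_psi μ).convex_setOf_isMaxOn⟩,
    fun ε hε => ?_, fun V hV hCV => ?_⟩
  · obtain ⟨w, hw, hmax⟩ := husc.exists_isMaxOn hΛ hΛc
    exact ⟨w, hw, hmax⟩
  · have hsup := hunif.tendsto_sSup_image hΛ (husc.bddAbove_of_isCompact hΛc)
    obtain ⟨U, hU, hUo, hμU⟩ :=
      eventually_nhds_iff.1 (hunique.and (Metric.tendsto_nhds.1 hsup ε hε))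
    exact ⟨U, hUo, hμU, fun ν hν => ⟨(hU ν hν).1, Real.dist_eq _ _ ▸ (hU ν hν).2⟩⟩
  · obtain ⟨U, hU, hUo, hμU⟩ := eventually_nhds_iff.1
      (hunique.and (hunif.eventually_setOf_isMaxOn_subset hΛc husc hV hCV))
    exact ⟨U, hUo, hμU, hU⟩

/-- (Maximum theorem) (i) `C*(μ)` is nonempty, compact and convex; (ii) `ψ*` is continuous
at `μ` (with unique best arms nearby); (iii) `C*` is upper hemicontinuous at `μ`. -/
theorem maximum_theorem {d : ℕ} (𝒜 : Finset (Fin d → ℝ))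
    (hspan : Submodule.span ℝ (𝒜 : Set (Fin d → ℝ)) = ⊤)
    (μ : Fin d → ℝ) (hstar : ∃! astar, IsBestArm 𝒜 μ astar) :
    ((Cstar 𝒜 μ).Nonempty ∧ IsCompact (Cstar 𝒜 μ) ∧ Convex ℝ (Cstar 𝒜 μ)) ∧
    (∀ ε : ℝ, 0 < ε → ∃ U : Set (Fin d → ℝ), IsOpen U ∧ μ ∈ U ∧
      ∀ μ' ∈ U, (∃! astar', IsBestArm 𝒜 μ' astar') ∧ |psiStar 𝒜 μ' - psiStar 𝒜 μ| < ε) ∧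
    (∀ V : Set ({a // a ∈ 𝒜} → ℝ), IsOpen V → Cstar 𝒜 μ ⊆ V →
      ∃ U : Set (Fin d → ℝ), IsOpen U ∧ μ ∈ U ∧
        ∀ μ' ∈ U, (∃! astar', IsBestArm 𝒜 μ' astar') ∧ Cstar 𝒜 μ' ⊆ V) :=
  maximum_theorem_general 𝒜 μ hstar
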